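/- Suppose λ_1 ≥ λ_2 ≥ ... ≥ λ_n are real numbers with Σ_{i=1}^n arctan(λ_i) ≥ (n-2)·π/2 + δ for some δ > 0 (n ≥ 2), and suppose λ_n < 0. Then Σ_{i=1}^n 1/λ_i ≤ -tan(δ). -/

import Mathlib

/-!
Put `θᵢ = arctan λᵢ` and let `m` be the index of the negative entry. The angles `φᵢ = π/2 - θᵢ`
(`i ≠ m`) are nonnegative with `tan φᵢ = 1/λᵢ`, and the hypothesis on `∑ θᵢ` says exactly that
`∑_{i ≠ m} φᵢ + δ ≤ π/2 + θₘ < π/2`. Since `tan` is superadditive on `[0, π/2)`, this gives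
`∑_{i ≠ m} 1/λᵢ + tan δ ≤ tan (π/2 + θₘ) = -1/λₘ`.
-/

open Real Finset

lemma tan_add_le_tan_add {a b : ℝ} (ha : 0 ≤ a) (hb : 0 ≤ b) (hab : a + b < π / 2) :
    tan a + tan b ≤ tan (a + b) := by
  have hca : 0 < cos a := cos_pos_of_mem_Ioo ⟨by linarith [pi_pos], by linarith⟩
  have hcb : 0 < cos b := cos_pos_of_mem_Ioo ⟨by linarith [pi_pos], by linarith⟩
  have hcab : 0 < cos (a + b) := cos_pos_of_mem_Ioo ⟨by linarith [pi_pos], hab⟩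
  have hsa : 0 ≤ sin a := sin_nonneg_of_nonneg_of_le_pi ha (by linarith [pi_pos])
  have hsb : 0 ≤ sin b := sin_nonneg_of_nonneg_of_le_pi hb (by linarith [pi_pos])
  have hsab : 0 ≤ sin (a + b) := sin_nonneg_of_nonneg_of_le_pi (by linarith) (by linarith [pi_pos])
  rw [tan_eq_sin_div_cos, tan_eq_sin_div_cos, tan_eq_sin_div_cos, div_add_div _ _ hca.ne' hcb.ne',
    div_le_div_iff₀ (by positivity) hcab, ← sin_add, cos_add]
  nlinarith [mul_nonneg hsab (mul_nonneg hsa hsb)]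

lemma sum_tan_le_tan_sum {ι : Type*} (s : Finset ι) (f : ι → ℝ) (hf : ∀ i ∈ s, 0 ≤ f i)
    (hs : ∑ i ∈ s, f i < π / 2) : ∑ i ∈ s, tan (f i) ≤ tan (∑ i ∈ s, f i) := by
  induction s using Finset.cons_induction with
  | empty => simp
  | cons a t hat ih =>
    rw [sum_cons] at hs ⊢
    rw [sum_cons]
    have hft : ∀ i ∈ t, 0 ≤ f i := fun i hi => hf i (mem_cons_of_mem hi)
    have ht := ih hft (by linarith [hf a (mem_cons_self a t)])
    linarith [tan_add_le_tan_add (hf a (mem_cons_self a t)) (sum_nonneg hft) hs]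

lemma tan_pi_div_two_sub_arctan (x : ℝ) : tan (π / 2 - arctan x) = x⁻¹ := by
  rw [tan_pi_div_two_sub, tan_arctan]

lemma tan_pi_div_two_add_arctan (x : ℝ) : tan (π / 2 + arctan x) = -x⁻¹ := by
  rw [show π / 2 + arctan x = -(π / 2 - arctan x) + π by ring, tan_periodic, tan_neg,
    tan_pi_div_two_sub_arctan]

theorem sum_inv_le_neg_tan_of_le_sum_arctan {ι : Type*} [Fintype ι] (lam : ι → ℝ) (m : ι)
    (hm : lam m < 0) {δ : ℝ} (hδ : 0 ≤ δ)
    (hsum : (Fintype.card ι - 2 : ℝ) * (π / 2) + δ ≤ ∑ i, arctan (lam i)) :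
    ∑ i, (lam i)⁻¹ ≤ -tan δ := by
  classical
  set s := univ.erase m
  set φ : ι → ℝ := fun i => π / 2 - arctan (lam i)
  set ψ := π / 2 + arctan (lam m)
  have hφ : ∀ i ∈ s, 0 ≤ φ i := fun i _ => sub_nonneg.mpr (arctan_lt_pi_div_two _).le
  have hψ : ψ < π / 2 := by
    change π / 2 + arctan (lam m) < π / 2
    linarith [arctan_lt_zero.mpr hm]
  have hangles : ∑ i ∈ s, φ i + δ ≤ ψ := by
    have hcard : ((#s : ℕ) : ℝ) + 1 = Fintype.card ι := by
      exact_mod_cast card_erase_add_one (mem_univ m)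
    have hsplit : ∑ i ∈ s, arctan (lam i) = ∑ i, arctan (lam i) - arctan (lam m) :=
      sum_erase_eq_sub (mem_univ m)
    rw [← hcard] at hsum
    simp only [φ, ψ, sum_sub_distrib, sum_const, nsmul_eq_mul]
    linarith
  have hφsum : 0 ≤ ∑ i ∈ s, φ i := sum_nonneg hφ
  calc ∑ i, (lam i)⁻¹
      = -tan ψ + ∑ i ∈ s, tan (φ i) := by
        simp only [φ, ψ, tan_pi_div_two_sub_arctan, tan_pi_div_two_add_arctan, neg_neg]
        exact (add_sum_erase _ _ (mem_univ m)).symm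
    _ ≤ -tan ψ + tan (∑ i ∈ s, φ i) := by
        gcongr; exact sum_tan_le_tan_sum s φ hφ (by linarith)
    _ ≤ -tan ψ + (tan (∑ i ∈ s, φ i + δ) - tan δ) := by
        linarith [tan_add_le_tan_add hφsum hδ (by linarith)]
    _ ≤ -tan ψ + (tan ψ - tan δ) := by
        gcongr
        exact strictMonoOn_tan.monotoneOn ⟨by linarith [pi_pos], by linarith⟩
          ⟨by linarith [pi_pos], hψ⟩ hangles
    _ = -tan δ := by ring

theorem supercritical_sum_reciprocals (n : ℕ) (hn : 2 ≤ n) (lam : Fin n → ℝ)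
    (δ : ℝ) (hδ : 0 < δ)
    (hsum : (n - 2 : ℝ) * (π / 2) + δ ≤ ∑ i, arctan (lam i))
    (hneg : lam ⟨n - 1, by omega⟩ < 0) :
    ∑ i, (lam i)⁻¹ ≤ -tan δ :=
  sum_inv_le_neg_tan_of_le_sum_arctan lam _ hneg hδ.le (by rwa [Fintype.card_fin])
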